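/- arXiv:1512.07118 — 9 statements merged into one kernel-verified Lean document; each statement's English description precedes it below -/
import Mathlib

section
/- Let A be an n×n complex matrix with eigenvalue λ and associated eigenvector u (Au = λu, u ≠ 0), and let v be any vector in ℂⁿ. Then the characteristic polynomial of à = A + u v* equals the characteristic polynomial of A multiplied by (z - λ - v*u)/(z - λ); in particular, the multiset of eigenvalues of à is obtained from that of A by replacing one occurrence of λ with λ + v*u. -/
/-!
Let `M = X·1 - A` be the characteristic matrix, so `M u = (X - λ) u` and
`charmatrix (A + u v*) = M - u v*`. The matrix determinant lemma gives
`det (M - u v*) = det M · (1 - v* M⁻¹ u)`, and multiplying by `X - λ` turns `(X - λ) M⁻¹ u`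
into `u`, leaving `(X - λ - v* u) · det M`. `M` is invertible after localizing at the monic,
hence regular, polynomial `det M`, and the identity descends since that localization is injective.
-/

open Matrix Polynomial

namespace Matrix

variable {R : Type*} [CommRing R] {m ι : Type*} [Fintype m] [DecidableEq m]

theorem mul_det_add_mul_of_mul_eq_smul [Unique ι] {M : Matrix m m R} (hM : IsUnit M.det)
    {u : Matrix m ι R} {c : R} (hu : M * u = c • u) (w : Matrix ι m R) :
    c * (M + u * w).det = (c + (w * u) default default) * M.det := by
  have hMinv : c • (M⁻¹ * u) = u := by
    rw [← Matrix.mul_smul, ← hu, ← Matrix.mul_assoc, nonsing_inv_mul M hM, Matrix.one_mul]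
  rw [det_add_mul u w hM, det_unique (1 + w * M⁻¹ * u), Matrix.add_apply, one_apply_eq,
    Matrix.mul_assoc]
  calc c * (M.det * (1 + (w * (M⁻¹ * u)) default default))
      = (c + (w * (c • (M⁻¹ * u))) default default) * M.det := by
        rw [Matrix.mul_smul, smul_apply, smul_eq_mul]; ring
    _ = _ := by rw [hMinv]

theorem mul_det_add_mul_of_mul_eq_smul_of_isRegular [Unique ι] {M : Matrix m m R}
    (hM : IsRegular M.det) {u : Matrix m ι R} {c : R} (hu : M * u = c • u) (w : Matrix ι m R) :
    c * (M + u * w).det = (c + (w * u) default default) * M.det := by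
  set f := algebraMap R (Localization.Away M.det)
  have hf : Function.Injective f := IsLocalization.injectiveₛ (Localization.Away M.det) <| by
    intro x hx
    obtain ⟨k, rfl⟩ := (Submonoid.mem_powers_iff x M.det).mp hx
    exact hM.pow k
  have hdet : IsUnit (M.map f).det := by
    rw [← RingHom.mapMatrix_apply, ← RingHom.map_det]
    exact IsLocalization.Away.algebraMap_isUnit M.det
  have hu' : M.map f * u.map f = f c • u.map f := by
    rw [← Matrix.map_mul, hu]; ext; simp
  have := mul_det_add_mul_of_mul_eq_smul hdet hu' (w.map f)
  simp only [← Matrix.map_mul, map_apply] at this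
  apply hf
  simpa [RingHom.map_det, Matrix.map_add, Matrix.map_mul] using this

theorem charmatrix_add_mul [Fintype ι] (A : Matrix m m R) (u : Matrix m ι R) (w : Matrix ι m R) :
    charmatrix (A + u * w) = charmatrix A + -u.map C * w.map C := by
  rw [charmatrix, charmatrix, RingHom.mapMatrix_apply, RingHom.mapMatrix_apply,
    Matrix.map_add _ (map_add C), Matrix.map_mul, Matrix.neg_mul]
  abel

theorem charmatrix_mul_of_mul_eq_smul {A : Matrix m m R} {u : Matrix m ι R} {lam : R}
    (hu : A * u = lam • u) : charmatrix A * u.map C = (X - C lam) • u.map C := by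
  rw [charmatrix, RingHom.mapMatrix_apply, Matrix.sub_mul, ← Matrix.map_mul, hu, sub_smul]
  ext
  simp

theorem charpoly_add_mul_of_mul_eq_smul [Unique ι] {A : Matrix m m R} {u : Matrix m ι R} {lam : R}
    (hu : A * u = lam • u) (w : Matrix ι m R) :
    (X - C lam) * (A + u * w).charpoly
      = (X - C (lam + (w * u) default default)) * A.charpoly := by
  have hu' : charmatrix A * -u.map C = (X - C lam) • -u.map C := by
    rw [Matrix.mul_neg, smul_neg, charmatrix_mul_of_mul_eq_smul hu]
  rw [charpoly, charpoly, charmatrix_add_mul,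
    mul_det_add_mul_of_mul_eq_smul_of_isRegular (charpoly_monic A).isRegular hu',
    Matrix.mul_neg, neg_apply, ← Matrix.map_mul, map_apply, C_add]
  ring

end Matrix

theorem brauer_charpoly_general (n : ℕ) (A : Matrix (Fin n) (Fin n) ℂ) (lam : ℂ)
    (u v : Matrix (Fin n) (Fin 1) ℂ) (huA : A * u = lam • u) :
    (X - C lam) * (A + u * vᴴ).charpoly
      = (X - C (lam + (vᴴ * u) 0 0)) * A.charpoly :=
  charpoly_add_mul_of_mul_eq_smul huA vᴴ

theorem brauer_charpoly (n : ℕ) (A : Matrix (Fin n) (Fin n) ℂ) (lam : ℂ)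
    (u v : Matrix (Fin n) (Fin 1) ℂ) (hu : u ≠ 0) (huA : A * u = lam • u) :
    (X - C lam) * (A + u * vᴴ).charpoly
      = (X - C (lam + (vᴴ * u) 0 0)) * A.charpoly :=
  brauer_charpoly_general n A lam u v huA
end

section
/- Let A(z) = Σ_{i=0}^d z^i A_i be an n×n matrix polynomial, λ ∈ ℂ and u ≠ 0 with A(λ)u = 0, μ ∈ ℂ, and v ∈ ℂⁿ with v*u = 1; set Q = uv*. Then for all z ≠ λ, A(z)(I + ((λ-μ)/(z-λ))Q) = Σ_{i=0}^d z^i Ã_i, where Ã_d = A_d and Ã_i = A_i + (λ-μ) Σ_{k=0}^{d-i-1} λ^k A_{k+i+1} Q for 0 ≤ i ≤ d-1. In particular the shifted function is again a matrix polynomial of degree at most d. -/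
/-!
Since `A(λ)Q = 0`, we have `A(z)Q = A(z)Q - A(λ)Q = Σ (z^i - λ^i) A_i Q`, and every `z^i - λ^i` is
divisible by `z - λ`. Synthetic division by `z - λ` turns `((λ - μ)/(z - λ)) A(z)Q` into the
polynomial `(λ - μ) Σ_i z^i Σ_k λ^k A_{k+i+1} Q`, which is exactly the correction term in `Ã_i`.
-/

open Matrix Finset

theorem sum_pow_sub_pow_smul_eq_sub_smul {R M : Type*} [CommRing R] [AddCommGroup M] [Module R M]
    (z w : R) (B : ℕ → M) (d : ℕ) :
    ∑ i ∈ range (d + 1), (z ^ i - w ^ i) • B i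
      = (z - w) • ∑ i ∈ range d, z ^ i • ∑ k ∈ range (d - i), w ^ k • B (k + i + 1) := by
  calc ∑ i ∈ range (d + 1), (z ^ i - w ^ i) • B i
      = (z - w) • ∑ i ∈ range (d + 1), ∑ j ∈ range i, (z ^ j * w ^ (i - 1 - j)) • B i := by
        simp only [smul_sum, ← geom_sum₂_mul z w, mul_comm _ (z - w), mul_smul, sum_smul]
    _ = (z - w) • ∑ j ∈ range d, ∑ k ∈ range (j + 1), (z ^ k * w ^ (j - k)) • B (j + 1) := by
        simp [sum_range_succ']
    _ = (z - w) • ∑ i ∈ range d, ∑ k ∈ range (d - i), (z ^ i * w ^ k) • B (k + i + 1) := by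
        rw [← sum_range_diag_flip d fun i k ↦ (z ^ i * w ^ k) • B (k + i + 1)]
        refine congrArg _ (sum_congr rfl fun j _ ↦ sum_congr rfl fun k hk ↦ ?_)
        rw [Nat.sub_add_cancel (Nat.le_of_lt_succ (mem_range.mp hk))]
    _ = (z - w) • ∑ i ∈ range d, z ^ i • ∑ k ∈ range (d - i), w ^ k • B (k + i + 1) := by
        simp only [smul_sum, mul_smul, smul_comm (z ^ _) (w ^ _)]

theorem sum_range_succ_smul_of_eq_add {R M : Type*} [Semiring R] [AddCommMonoid M] [Module R M]
    (z : R) {d : ℕ} {f g h : ℕ → M} (hd : g d = f d) (hlt : ∀ i < d, g i = f i + h i) :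
    ∑ i ∈ range (d + 1), z ^ i • g i
      = ∑ i ∈ range (d + 1), z ^ i • f i + ∑ i ∈ range d, z ^ i • h i := by
  rw [sum_range_succ, sum_range_succ, hd, add_right_comm, ← sum_add_distrib]
  congr 1
  exact sum_congr rfl fun i hi ↦ by rw [hlt i (mem_range.mp hi), smul_add]

theorem brauer_matpol_general (n d : ℕ) (A : ℕ → Matrix (Fin n) (Fin n) ℂ) (lam mu : ℂ)
    (u v : Matrix (Fin n) (Fin 1) ℂ)
    (huA : (∑ i ∈ range (d + 1), lam ^ i • A i) * u = 0)
    (At : ℕ → Matrix (Fin n) (Fin n) ℂ)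
    (hAtd : At d = A d)
    (hAti : ∀ i < d, At i = A i + (lam - mu) •
      ∑ k ∈ range (d - i), lam ^ k • (A (k + i + 1) * (u * vᴴ)))
    (z : ℂ) (hz : z ≠ lam) :
    (∑ i ∈ range (d + 1), z ^ i • A i) *
        (1 + ((lam - mu) / (z - lam)) • (u * vᴴ))
      = ∑ i ∈ range (d + 1), z ^ i • At i := by
  set Q := u * vᴴ
  have hAQ : (∑ i ∈ range (d + 1), lam ^ i • A i) * Q = 0 := by
    rw [← Matrix.mul_assoc, huA, Matrix.zero_mul]
  have hdiv : (∑ i ∈ range (d + 1), z ^ i • A i) * Q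
      = (z - lam) • ∑ i ∈ range d, z ^ i • ∑ k ∈ range (d - i), lam ^ k • (A (k + i + 1) * Q) := by
    calc (∑ i ∈ range (d + 1), z ^ i • A i) * Q
        = ∑ i ∈ range (d + 1), (z ^ i - lam ^ i) • (A i * Q) := by
          rw [← sub_zero (_ * Q), ← hAQ]
          simp only [sum_mul, smul_mul, ← sum_sub_distrib, sub_smul]
      _ = _ := sum_pow_sub_pow_smul_eq_sub_smul z lam _ d
  rw [sum_range_succ_smul_of_eq_add z hAtd hAti, Matrix.mul_add, Matrix.mul_one, Matrix.mul_smul,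
    hdiv, smul_smul, div_mul_cancel₀ _ (sub_ne_zero.mpr hz), smul_sum]
  simp only [smul_comm (lam - mu) (z ^ _)]

theorem brauer_matpol (n d : ℕ) (A : ℕ → Matrix (Fin n) (Fin n) ℂ) (lam mu : ℂ)
    (u v : Matrix (Fin n) (Fin 1) ℂ) (hu : u ≠ 0)
    (huA : (∑ i ∈ range (d + 1), lam ^ i • A i) * u = 0)
    (hv : (vᴴ * u) 0 0 = 1)
    (At : ℕ → Matrix (Fin n) (Fin n) ℂ)
    (hAtd : At d = A d)
    (hAti : ∀ i < d, At i = A i + (lam - mu) •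
      ∑ k ∈ range (d - i), lam ^ k • (A (k + i + 1) * (u * vᴴ)))
    (z : ℂ) (hz : z ≠ lam) :
    (∑ i ∈ range (d + 1), z ^ i • A i) *
        (1 + ((lam - mu) / (z - lam)) • (u * vᴴ))
      = ∑ i ∈ range (d + 1), z ^ i • At i :=
  brauer_matpol_general n d A lam mu u v huA At hAtd hAti z hz
end

section
/- Let A ∈ ℂ^{n×n}, U ∈ ℂ^{n×m} of full column rank and Λ ∈ ℂ^{m×m} with AU = UΛ (m < n). Let V ∈ ℂ^{n×m} with V*U = I_m and S ∈ ℂ^{m×m} arbitrary. Then for every z not an eigenvalue of Λ, (zI - A)(I + U(zI - Λ)^{-1}(Λ - S)V*) = zI - Ã, where Ã = A - U(Λ - S)V*. -/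
/-! Because `A U = U Λ`, the shifted matrix `z I - A` intertwines `U` with `z I - Λ`; hence it
carries `U (z I - Λ)⁻¹` to `U`, and the correction term collapses to `U (Λ - S) V*`. -/

open Matrix

namespace Matrix

variable {m n R : Type*} [Fintype m] [Fintype n] [DecidableEq m] [DecidableEq n] [CommRing R]

theorem smul_one_sub_mul_of_mul_eq {A : Matrix n n R} {U : Matrix n m R} {Λ : Matrix m m R}
    (hAU : A * U = U * Λ) (z : R) : (z • 1 - A) * U = U * (z • 1 - Λ) := by
  rw [Matrix.sub_mul, Matrix.mul_sub, hAU, Matrix.smul_mul, Matrix.mul_smul, Matrix.one_mul,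
    Matrix.mul_one]

theorem mul_one_add_mul_inv_mul_of_mul_eq {M : Matrix n n R} {U : Matrix n m R}
    {B : Matrix m m R} (hMU : M * U = U * B) (hB : IsUnit B.det) (C : Matrix m m R)
    (W : Matrix m n R) : M * (1 + U * B⁻¹ * C * W) = M + U * C * W := by
  have hcollapse : M * (U * B⁻¹ * C * W) = U * C * W := by
    calc M * (U * B⁻¹ * C * W) = M * U * B⁻¹ * C * W := by simp only [Matrix.mul_assoc]
      _ = U * (B * B⁻¹) * C * W := by rw [hMU, Matrix.mul_assoc U]
      _ = U * C * W := by rw [mul_nonsing_inv B hB, Matrix.mul_one]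
  rw [Matrix.mul_add, Matrix.mul_one, hcollapse]

end Matrix

theorem brauer_multishift_general (n m : ℕ)
    (A : Matrix (Fin n) (Fin n) ℂ)
    (U V : Matrix (Fin n) (Fin m) ℂ) (Lam S : Matrix (Fin m) (Fin m) ℂ)
    (hAU : A * U = U * Lam)
    (z : ℂ) (hz : (z • (1 : Matrix (Fin m) (Fin m) ℂ) - Lam).det ≠ 0) :
    (z • (1 : Matrix (Fin n) (Fin n) ℂ) - A) *
        (1 + U * (z • (1 : Matrix (Fin m) (Fin m) ℂ) - Lam)⁻¹ * (Lam - S) * Vᴴ)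
      = z • (1 : Matrix (Fin n) (Fin n) ℂ) - (A - U * (Lam - S) * Vᴴ) := by
  rw [mul_one_add_mul_inv_mul_of_mul_eq (smul_one_sub_mul_of_mul_eq hAU z) hz.isUnit]
  abel

theorem brauer_multishift (n m : ℕ) (hmn : m < n)
    (A : Matrix (Fin n) (Fin n) ℂ)
    (U V : Matrix (Fin n) (Fin m) ℂ) (Lam S : Matrix (Fin m) (Fin m) ℂ)
    (hU : U.rank = m) (hAU : A * U = U * Lam)
    (hVU : Vᴴ * U = 1)
    (z : ℂ) (hz : (z • (1 : Matrix (Fin m) (Fin m) ℂ) - Lam).det ≠ 0) :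
    (z • (1 : Matrix (Fin n) (Fin n) ℂ) - A) *
        (1 + U * (z • (1 : Matrix (Fin m) (Fin m) ℂ) - Lam)⁻¹ * (Lam - S) * Vᴴ)
      = z • (1 : Matrix (Fin n) (Fin n) ℂ) - (A - U * (Lam - S) * Vᴴ) :=
  brauer_multishift_general n m A U V Lam S hAU z hz
end

section
/- With A, U, Λ, V, S as in the multishift setting and Ã = A - U(Λ - S)V*, one has det(zI - Ã) = det(zI - S) · det(zI - A) / det(zI - Λ) for all z avoiding the spectrum of Λ; hence the eigenvalues of Ã are those of A with the eigenvalues of Λ replaced by the eigenvalues of S. -/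
/-!
Since `(zI - A) U = U (zI - Λ)` and `zI - Λ` is invertible, `U = (zI - A) U (zI - Λ)⁻¹`, so the
rank-`m` update factors as `zI - Ã = (zI - A) (I + U (zI - Λ)⁻¹ (Λ - S) V*)`. Sylvester's
determinant identity and `V* U = I` turn the second factor into the `m × m` determinant
`det (I + (zI - Λ)⁻¹ (Λ - S)) = det (zI - S) / det (zI - Λ)`.
-/

open Matrix

namespace Matrix

variable {ι κ R : Type*} [Fintype ι] [DecidableEq ι] [Fintype κ] [DecidableEq κ] [CommRing R]

theorem smul_one_sub_mul_eq_mul_smul_one_sub {A : Matrix ι ι R} {U : Matrix ι κ R}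
    {Λ : Matrix κ κ R} (hAU : A * U = U * Λ) (z : R) :
    (z • 1 - A) * U = U * (z • 1 - Λ) := by
  rw [Matrix.sub_mul, Matrix.mul_sub, hAU, Matrix.smul_mul, Matrix.mul_smul, Matrix.one_mul,
    Matrix.mul_one]

theorem det_add_mul_mul_mul_det_of_mul_eq_mul {B : Matrix ι ι R} {U : Matrix ι κ R}
    {W : Matrix κ κ R} (hBU : B * U = U * W) (hW : IsUnit W.det)
    (X : Matrix κ κ R) {Y : Matrix κ ι R} (hYU : Y * U = 1) :
    (B + U * X * Y).det * W.det = B.det * (W + X).det := by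
  have hU : B * (U * W⁻¹) = U := by
    rw [← Matrix.mul_assoc, hBU, Matrix.mul_assoc, Matrix.mul_nonsing_inv _ hW, Matrix.mul_one]
  have hfactor : B + U * X * Y = B * (1 + U * (W⁻¹ * X * Y)) := by
    conv_lhs => rw [← hU]
    simp only [Matrix.mul_add, Matrix.mul_one, Matrix.mul_assoc]
  have hsylvester : (1 + U * (W⁻¹ * X * Y)).det = (1 + W⁻¹ * X).det := by
    rw [det_one_add_mul_comm, Matrix.mul_assoc, hYU, Matrix.mul_one]
  have hsmall : (1 + W⁻¹ * X).det * W.det = (W + X).det := by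
    rw [mul_comm, ← det_mul, Matrix.mul_add, Matrix.mul_one, ← Matrix.mul_assoc,
      Matrix.mul_nonsing_inv _ hW, Matrix.one_mul]
  rw [hfactor, det_mul, hsylvester, mul_assoc, hsmall]

end Matrix

theorem brauer_multishift_det_general (n m : ℕ)
    (A : Matrix (Fin n) (Fin n) ℂ)
    (U V : Matrix (Fin n) (Fin m) ℂ) (Lam S : Matrix (Fin m) (Fin m) ℂ)
    (hAU : A * U = U * Lam)
    (hVU : Vᴴ * U = 1)
    (z : ℂ) (hz : (z • (1 : Matrix (Fin m) (Fin m) ℂ) - Lam).det ≠ 0) :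
    (z • (1 : Matrix (Fin n) (Fin n) ℂ) - (A - U * (Lam - S) * Vᴴ)).det
      = (z • (1 : Matrix (Fin m) (Fin m) ℂ) - S).det *
          (z • (1 : Matrix (Fin n) (Fin n) ℂ) - A).det /
          (z • (1 : Matrix (Fin m) (Fin m) ℂ) - Lam).det := by
  have key := det_add_mul_mul_mul_det_of_mul_eq_mul
    (smul_one_sub_mul_eq_mul_smul_one_sub hAU z) hz.isUnit (Lam - S) hVU
  rw [sub_add_sub_cancel] at key
  rw [eq_div_iff hz, sub_sub_eq_add_sub, add_sub_right_comm, key, mul_comm]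

theorem brauer_multishift_det (n m : ℕ) (hmn : m < n)
    (A : Matrix (Fin n) (Fin n) ℂ)
    (U V : Matrix (Fin n) (Fin m) ℂ) (Lam S : Matrix (Fin m) (Fin m) ℂ)
    (hU : U.rank = m) (hAU : A * U = U * Lam)
    (hVU : Vᴴ * U = 1)
    (z : ℂ) (hz : (z • (1 : Matrix (Fin m) (Fin m) ℂ) - Lam).det ≠ 0) :
    (z • (1 : Matrix (Fin n) (Fin n) ℂ) - (A - U * (Lam - S) * Vᴴ)).det
      = (z • (1 : Matrix (Fin m) (Fin m) ℂ) - S).det *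
          (z • (1 : Matrix (Fin n) (Fin n) ℂ) - A).det /
          (z • (1 : Matrix (Fin m) (Fin m) ℂ) - Lam).det :=
  brauer_multishift_det_general n m A U V Lam S hAU hVU z hz
end

section
/- Let A(z) = Σ_{i=0}^d z^i A_i with Σ_{i=0}^d A_i U Λ^i = 0, U full column rank, V*U = I_m, S ∈ ℂ^{m×m} arbitrary. Then for z not in the spectrum of Λ, A(z)(I + U(zI-Λ)^{-1}(Λ-S)V*) = Σ_{i=0}^d z^i Ã_i where Ã_d = A_d and Ã_j = A_j + Σ_{k=0}^{d-j-1} A_{k+j+1} U Λ^k (Λ - S) V* for 0 ≤ j ≤ d-1; moreover det Ã(z) = det(zI-S) det A(z) / det(zI-Λ). -/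
open Matrix Finset

/-!
Dividing `A(z) U` by `zI - Λ` on the right leaves the remainder `Σ A_i U Λ^i`, which vanishes
because `(U, Λ)` is a block eigenpair; hence `A(z) U (zI - Λ)⁻¹` is the polynomial
`Σ_i A_i U Σ_{k<i} z^k Λ^{i-1-k}`, and regrouping it by powers of `z` produces the coefficients `Ã_j`.
For the determinant, Sylvester's identity `det (1 + X Y) = det (1 + Y X)` and `V* U = I` reduce
`det (I + U (zI - Λ)⁻¹ (Λ - S) V*)` to `det ((zI - Λ)⁻¹ (zI - S))`.
-/

section

variable {R : Type*} [CommRing R] {ι κ ν μ : Type*} [Fintype κ] [DecidableEq κ]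

theorem geom_sum_smul_pow_mul_smul_one_sub (x : R) (L : Matrix κ κ R) (i : ℕ) :
    (∑ k ∈ range i, x ^ k • L ^ (i - 1 - k)) * (x • 1 - L) = x ^ i • 1 - L ^ i := by
  simpa only [smul_pow, one_pow, smul_mul_assoc, Matrix.one_mul] using ((Commute.one_left L).smul_left x).geom_sum₂_mul i

variable [Fintype ι]

theorem sum_smul_mul_eq_mul_smul_one_sub_add (s : Finset ℕ) (A : ℕ → Matrix ν ι R)
    (U : Matrix ι κ R) (L : Matrix κ κ R) (x : R) :
    (∑ i ∈ s, x ^ i • A i) * U =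
      (∑ i ∈ s, A i * U * ∑ k ∈ range i, x ^ k • L ^ (i - 1 - k)) * (x • 1 - L) +
        ∑ i ∈ s, A i * U * L ^ i := by
  rw [Matrix.sum_mul, Matrix.sum_mul, ← sum_add_distrib]
  refine sum_congr rfl fun i _ => ?_
  rw [Matrix.mul_assoc, geom_sum_smul_pow_mul_smul_one_sub, Matrix.mul_sub, Matrix.mul_smul,
    Matrix.mul_one, sub_add_cancel, Matrix.smul_mul]

theorem sum_mul_geom_sum_mul_eq (d : ℕ) (A : ℕ → Matrix ν ι R) (U : Matrix ι κ R)
    (L : Matrix κ κ R) (W : Matrix κ μ R) (x : R) :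
    (∑ i ∈ range (d + 1), A i * U * ∑ k ∈ range i, x ^ k • L ^ (i - 1 - k)) * W =
      ∑ j ∈ range d, x ^ j • ∑ k ∈ range (d - j), A (k + j + 1) * U * L ^ k * W := by
  rw [sum_range_succ', sum_range_zero, Matrix.mul_zero, add_zero, Matrix.sum_mul]
  calc ∑ i ∈ range d, A (i + 1) * U * (∑ k ∈ range (i + 1), x ^ k • L ^ (i + 1 - 1 - k)) * W
      = ∑ i ∈ range d, ∑ k ∈ range (i + 1),
          x ^ k • (A (k + (i - k) + 1) * U * L ^ (i - k) * W) := by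
        refine sum_congr rfl fun i _ => ?_
        rw [Matrix.mul_sum, Matrix.sum_mul]
        refine sum_congr rfl fun k hk => ?_
        rw [Nat.add_sub_cancel, Nat.add_sub_of_le (Nat.lt_succ_iff.mp (mem_range.mp hk)),
          Matrix.mul_smul, Matrix.smul_mul, Matrix.mul_assoc (A (i + 1) * U)]
    -- both sides run over the pairs `(j, k)` with `j + k < d`
    _ = ∑ j ∈ range d, ∑ k ∈ range (d - j), x ^ j • (A (k + j + 1) * U * L ^ k * W) := by
        simpa only [add_comm] using
          sum_range_diag_flip d fun j k => x ^ j • (A (j + k + 1) * U * L ^ k * W)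
    _ = _ := by simp only [smul_sum]

theorem sum_smul_mul_one_add_resolvent_mul [DecidableEq ι] (d : ℕ) (A : ℕ → Matrix ν ι R)
    (U : Matrix ι κ R) (L : Matrix κ κ R) (W : Matrix κ ι R) (x : R)
    (hUL : ∑ i ∈ range (d + 1), A i * U * L ^ i = 0) (hx : IsUnit (x • 1 - L).det) :
    (∑ i ∈ range (d + 1), x ^ i • A i) * (1 + U * (x • 1 - L)⁻¹ * W) =
      ∑ i ∈ range (d + 1), x ^ i • A i +
        ∑ j ∈ range d, x ^ j • ∑ k ∈ range (d - j), A (k + j + 1) * U * L ^ k * W := by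
  rw [Matrix.mul_add, Matrix.mul_one, ← Matrix.mul_assoc, ← Matrix.mul_assoc,
    sum_smul_mul_eq_mul_smul_one_sub_add, hUL, add_zero, Matrix.mul_assoc _ (x • 1 - L),
    mul_nonsing_inv _ hx, Matrix.mul_one, sum_mul_geom_sum_mul_eq]

end

theorem sum_range_succ_pow_smul_eq_add {R M : Type*} [Monoid R] [AddCommMonoid M]
    [DistribMulAction R M] (d : ℕ) (A B C : ℕ → M) (x : R) (hd : C d = A d)
    (hlt : ∀ j < d, C j = A j + B j) :
    ∑ i ∈ range (d + 1), x ^ i • C i =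
      ∑ i ∈ range (d + 1), x ^ i • A i + ∑ j ∈ range d, x ^ j • B j := by
  rw [sum_range_succ, sum_range_succ, hd, add_right_comm, ← sum_add_distrib]
  congr 1
  exact sum_congr rfl fun j hj => by rw [hlt j (mem_range.mp hj), smul_add]

theorem det_one_add_mul_inv_mul_mul {K ι κ : Type*} [Field K] [Fintype ι] [DecidableEq ι]
    [Fintype κ] [DecidableEq κ] (X : Matrix ι κ K) (Y : Matrix κ ι K) (M N : Matrix κ κ K)
    (hYX : Y * X = 1) (hM : M.det ≠ 0) :
    (1 + X * M⁻¹ * N * Y).det = (M + N).det / M.det := by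
  rw [Matrix.mul_assoc, Matrix.mul_assoc, det_one_add_mul_comm, Matrix.mul_assoc,
    Matrix.mul_assoc, hYX, Matrix.mul_one]
  rw [show (1 : Matrix κ κ K) + M⁻¹ * N = M⁻¹ * (M + N) by
    rw [Matrix.mul_add, nonsing_inv_mul _ (isUnit_iff_ne_zero.mpr hM)]]
  rw [det_mul, det_nonsing_inv, Ring.inverse_eq_inv', inv_mul_eq_div]

theorem brauer_multishift_matpol_general (n m d : ℕ)
    (A : ℕ → Matrix (Fin n) (Fin n) ℂ)
    (U V : Matrix (Fin n) (Fin m) ℂ) (Lam S : Matrix (Fin m) (Fin m) ℂ)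
    (hsolv : ∑ i ∈ range (d + 1), A i * U * Lam ^ i = 0)
    (hVU : Vᴴ * U = 1)
    (At : ℕ → Matrix (Fin n) (Fin n) ℂ)
    (hAtd : At d = A d)
    (hAtj : ∀ j < d, At j = A j +
      ∑ k ∈ range (d - j), A (k + j + 1) * U * Lam ^ k * (Lam - S) * Vᴴ)
    (z : ℂ) (hz : (z • (1 : Matrix (Fin m) (Fin m) ℂ) - Lam).det ≠ 0) :
    (∑ i ∈ range (d + 1), z ^ i • A i) *
        (1 + U * (z • (1 : Matrix (Fin m) (Fin m) ℂ) - Lam)⁻¹ * (Lam - S) * Vᴴ)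
      = ∑ i ∈ range (d + 1), z ^ i • At i ∧
    (∑ i ∈ range (d + 1), z ^ i • At i).det
      = (z • (1 : Matrix (Fin m) (Fin m) ℂ) - S).det *
          (∑ i ∈ range (d + 1), z ^ i • A i).det /
          (z • (1 : Matrix (Fin m) (Fin m) ℂ) - Lam).det := by
  have hprod : (∑ i ∈ range (d + 1), z ^ i • A i) *
      (1 + U * (z • (1 : Matrix (Fin m) (Fin m) ℂ) - Lam)⁻¹ * (Lam - S) * Vᴴ) =
        ∑ i ∈ range (d + 1), z ^ i • At i := by
    rw [sum_range_succ_pow_smul_eq_add d A _ At z hAtd hAtj, Matrix.mul_assoc (U * _),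
      sum_smul_mul_one_add_resolvent_mul d A U Lam _ z hsolv (isUnit_iff_ne_zero.mpr hz)]
    simp only [Matrix.mul_assoc]
  refine ⟨hprod, ?_⟩
  rw [← hprod, det_mul, det_one_add_mul_inv_mul_mul U Vᴴ _ _ hVU hz, sub_add_sub_cancel]
  ring

theorem brauer_multishift_matpol (n m d : ℕ)
    (A : ℕ → Matrix (Fin n) (Fin n) ℂ)
    (U V : Matrix (Fin n) (Fin m) ℂ) (Lam S : Matrix (Fin m) (Fin m) ℂ)
    (hU : U.rank = m)
    (hsolv : ∑ i ∈ range (d + 1), A i * U * Lam ^ i = 0)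
    (hVU : Vᴴ * U = 1)
    (At : ℕ → Matrix (Fin n) (Fin n) ℂ)
    (hAtd : At d = A d)
    (hAtj : ∀ j < d, At j = A j +
      ∑ k ∈ range (d - j), A (k + j + 1) * U * Lam ^ k * (Lam - S) * Vᴴ)
    (z : ℂ) (hz : (z • (1 : Matrix (Fin m) (Fin m) ℂ) - Lam).det ≠ 0) :
    (∑ i ∈ range (d + 1), z ^ i • A i) *
        (1 + U * (z • (1 : Matrix (Fin m) (Fin m) ℂ) - Lam)⁻¹ * (Lam - S) * Vᴴ)
      = ∑ i ∈ range (d + 1), z ^ i • At i ∧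
    (∑ i ∈ range (d + 1), z ^ i • At i).det
      = (z • (1 : Matrix (Fin m) (Fin m) ℂ) - S).det *
          (∑ i ∈ range (d + 1), z ^ i • A i).det /
          (z • (1 : Matrix (Fin m) (Fin m) ℂ) - Lam).det :=
  brauer_multishift_matpol_general n m d A U V Lam S hsolv hVU At hAtd hAtj z hz
end

section
/- Let A(z) = z^{-1}A_{-1} + A_0 + zA_1 admit the factorization (I - zR₊)K₊(I - z^{-1}G₊) with K₊ invertible, let A(λ)u = 0 with u ≠ 0, λ ≠ 0, I - λR₊ invertible, let v*u = 1, Q = uv*, and μ ∈ ℂ. Define Ã(z) = A(z)(I + ((λ-μ)/(z-λ))Q). Then Ã(z) = (I - zR₊)K₊(I - z^{-1}G̃₊) as Laurent polynomials, where G̃₊ = G₊ + (μ - λ)Q. Consequently R₊ solves X²Ã_{-1} + XÃ_0 + Ã_1 = 0 and G̃₊ solves Ã_{-1} + Ã_0X + Ã_1X² = 0, where Ã_1 = A_1, Ã_0 = A_0 + (λ-μ)A_1Q, Ã_{-1} = A_{-1} + (λ-μ)(A_0 + λA_1)Q. -/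
open Matrix

/-!
Evaluating the factorization at `z = λ`, the factors `I - λR₊` and `K₊` are invertible, so
`A(λ)u = 0` forces `(I - λ⁻¹G₊)u = 0`, i.e. `G₊u = λu` and hence `G₊Q = λQ`. With this,
`(I - z⁻¹G₊)(I + (λ-μ)/(z-λ) Q) = I - z⁻¹G̃₊`, and the shifted coefficients `Ã₋₁, Ã₀, Ã₁` are
exactly those of the factorization `(I - zR₊)K₊(I - z⁻¹G̃₊)`. Any such factorization yields the
two matrix equations by expanding the products.
-/

/-- Coefficientwise, `z⁻¹ Am1 + A0 + z A1 = (1 - z R) K (1 - z⁻¹ G)`. -/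
def IsULFactorization {A : Type*} [Ring A] (Am1 A0 A1 R K G : A) : Prop :=
  A1 = -(R * K) ∧ A0 = K + R * K * G ∧ Am1 = -(K * G)

namespace IsULFactorization

variable {A : Type*} [Ring A] {Am1 A0 A1 R K G : A}

theorem sq_mul_add_mul_add_eq_zero (hF : IsULFactorization Am1 A0 A1 R K G) :
    R ^ 2 * Am1 + R * A0 + A1 = 0 := by
  obtain ⟨rfl, rfl, rfl⟩ := hF
  noncomm_ring

theorem add_mul_add_mul_sq_eq_zero (hF : IsULFactorization Am1 A0 A1 R K G) :
    Am1 + A0 * G + A1 * G ^ 2 = 0 := by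
  obtain ⟨rfl, rfl, rfl⟩ := hF
  noncomm_ring

end IsULFactorization

section Algebra

variable {𝕜 A : Type*} [Field 𝕜] [Ring A] [Module 𝕜 A] [IsScalarTower 𝕜 A A]
  [SMulCommClass 𝕜 A A] {Am1 A0 A1 R K G : A}

theorem one_sub_inv_smul_mul_one_add_smul {G Q : A} {lam z : 𝕜} (mu : 𝕜)
    (hGQ : G * Q = lam • Q) (hz : z ≠ 0) (hzl : z ≠ lam) :
    (1 - z⁻¹ • G) * (1 + ((lam - mu) / (z - lam)) • Q) = 1 - z⁻¹ • (G + (mu - lam) • Q) := by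
  have hzl' : -lam + z ≠ 0 := by rwa [neg_add_eq_sub, sub_ne_zero]
  simp only [sub_mul, one_mul, mul_add, mul_one, smul_mul_assoc, mul_smul_comm, hGQ]
  match_scalars <;> field_simp; ring

theorem IsULFactorization.laurent_eq (hF : IsULFactorization Am1 A0 A1 R K G) {z : 𝕜}
    (hz : z ≠ 0) :
    z⁻¹ • Am1 + A0 + z • A1 = (1 - z • R) * K * (1 - z⁻¹ • G) := by
  obtain ⟨rfl, rfl, rfl⟩ := hF
  simp only [sub_mul, mul_sub, one_mul, mul_one, smul_mul_assoc, mul_smul_comm]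
  match_scalars <;> field_simp

theorem IsULFactorization.shift {Q : A} {lam : 𝕜} (mu : 𝕜)
    (hF : IsULFactorization Am1 A0 A1 R K G) (hGQ : G * Q = lam • Q) :
    IsULFactorization (Am1 + (lam - mu) • ((A0 + lam • A1) * Q)) (A0 + (lam - mu) • (A1 * Q))
      A1 R K (G + (mu - lam) • Q) := by
  obtain ⟨rfl, rfl, rfl⟩ := hF
  refine ⟨rfl, ?_, ?_⟩
  · simp only [mul_add, mul_smul_comm, neg_mul]
    module
  · have hKQ : (K + R * K * G + lam • -(R * K)) * Q = K * Q := by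
      simp only [add_mul, smul_mul_assoc, mul_assoc (R * K) G, hGQ, mul_smul_comm, neg_mul,
        smul_neg]
      abel
    rw [hKQ, mul_add, mul_smul_comm]
    module

end Algebra

theorem Matrix.mul_eq_smul_of_mul_mul_one_sub_inv_smul_mul_eq_zero {m p 𝕜 : Type*} [Fintype m]
    [DecidableEq m] [Field 𝕜] {P K G : Matrix m m 𝕜} {u : Matrix m p 𝕜} {lam : 𝕜}
    (hP : IsUnit P) (hK : IsUnit K) (hlam : lam ≠ 0)
    (h : P * K * (1 - lam⁻¹ • G) * u = 0) : G * u = lam • u := by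
  have : Invertible (P * K) := (hP.mul hK).invertible
  have hker : (1 - lam⁻¹ • G) * u = 0 :=
    Matrix.mul_right_injective_of_invertible (P * K) (by simpa [Matrix.mul_assoc] using h)
  rw [Matrix.sub_mul, Matrix.one_mul, Matrix.smul_mul, sub_eq_zero] at hker
  conv_rhs => rw [hker, smul_smul, mul_inv_cancel₀ hlam, one_smul]

theorem shifted_factorization_quadratic_general (n : ℕ)
    (Am1 A0 A1 R K G : Matrix (Fin n) (Fin n) ℂ)
    (hK : IsUnit K)
    (h1 : A1 = -(R * K)) (h0 : A0 = K + R * K * G) (hm1 : Am1 = -(K * G))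
    (lam mu : ℂ) (hlam : lam ≠ 0) (u v : Matrix (Fin n) (Fin 1) ℂ)
    (hAu : (lam⁻¹ • Am1 + A0 + lam • A1) * u = 0)
    (hR : IsUnit (1 - lam • R)) :
    let Q := u * vᴴ
    let Gt := G + (mu - lam) • Q
    let At1 := A1
    let At0 := A0 + (lam - mu) • (A1 * Q)
    let Atm1 := Am1 + (lam - mu) • ((A0 + lam • A1) * Q)
    (∀ z : ℂ, z ≠ 0 → z ≠ lam →
        (z⁻¹ • Am1 + A0 + z • A1) * (1 + ((lam - mu) / (z - lam)) • Q)
          = z⁻¹ • Atm1 + At0 + z • At1 ∧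
        z⁻¹ • Atm1 + At0 + z • At1
          = (1 - z • R) * K * (1 - z⁻¹ • Gt)) ∧
      R ^ 2 * Atm1 + R * At0 + At1 = 0 ∧
      Atm1 + At0 * Gt + At1 * Gt ^ 2 = 0 := by
  intro Q Gt At1 At0 Atm1
  have hF : IsULFactorization Am1 A0 A1 R K G := ⟨h1, h0, hm1⟩
  have hGu : G * u = lam • u := by
    rw [hF.laurent_eq hlam] at hAu
    exact mul_eq_smul_of_mul_mul_one_sub_inv_smul_mul_eq_zero hR hK hlam hAu
  have hGQ : G * Q = lam • Q := by
    rw [← Matrix.mul_assoc, hGu, Matrix.smul_mul]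
  have hFt : IsULFactorization Atm1 At0 At1 R K Gt := hF.shift mu hGQ
  refine ⟨fun z hz hzl => ⟨?_, hFt.laurent_eq hz⟩, hFt.sq_mul_add_mul_add_eq_zero,
    hFt.add_mul_add_mul_sq_eq_zero⟩
  rw [hFt.laurent_eq hz, hF.laurent_eq hz, Matrix.mul_assoc,
    one_sub_inv_smul_mul_one_add_smul mu hGQ hz hzl]

theorem shifted_factorization_quadratic (n : ℕ)
    (Am1 A0 A1 R K G : Matrix (Fin n) (Fin n) ℂ)
    (hK : IsUnit K)
    (h1 : A1 = -(R * K)) (h0 : A0 = K + R * K * G) (hm1 : Am1 = -(K * G))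
    (lam mu : ℂ) (hlam : lam ≠ 0) (u v : Matrix (Fin n) (Fin 1) ℂ) (hu : u ≠ 0)
    (hAu : (lam⁻¹ • Am1 + A0 + lam • A1) * u = 0)
    (hR : IsUnit (1 - lam • R))
    (hv : (vᴴ * u) 0 0 = 1) :
    let Q := u * vᴴ
    let Gt := G + (mu - lam) • Q
    let At1 := A1
    let At0 := A0 + (lam - mu) • (A1 * Q)
    let Atm1 := Am1 + (lam - mu) • ((A0 + lam • A1) * Q)
    (∀ z : ℂ, z ≠ 0 → z ≠ lam →
        (z⁻¹ • Am1 + A0 + z • A1) * (1 + ((lam - mu) / (z - lam)) • Q)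
          = z⁻¹ • Atm1 + At0 + z • At1 ∧
        z⁻¹ • Atm1 + At0 + z • At1
          = (1 - z • R) * K * (1 - z⁻¹ • Gt)) ∧
      R ^ 2 * Atm1 + R * At0 + At1 = 0 ∧
      Atm1 + At0 * Gt + At1 * Gt ^ 2 = 0 :=
  shifted_factorization_quadratic_general n Am1 A0 A1 R K G hK h1 h0 hm1 lam mu hlam u v hAu hR
end

section
/- Let A(z) = Σ_{i=0}^d z^i A_i with A_d u = 0 for some u ≠ 0, let v*u = 1, Q = uv*, and μ ≠ 0. Define Ã(z) = A(z)(I - zμ^{-1}Q). Then Ã(z) = Σ_{i=0}^d z^i Ã_i (a polynomial of degree at most d) with Ã_0 = A_0 and Ã_i = A_i - μ^{-1}A_{i-1}Q for 1 ≤ i ≤ d, and det Ã(z) = det A(z) · (1 - z/μ). -/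
/-!
Multiplying `A(z)` on the right by `1 - z μ⁻¹ Q` would produce a term of degree `d + 1` with
coefficient `-μ⁻¹ A_d Q`, which vanishes because `A_d u = 0`. The determinant of the rank-one
perturbation `1 - z μ⁻¹ u v*` of the identity is `1 - z μ⁻¹ v*u = 1 - z/μ` by the
Weinstein–Aronszajn identity `det (1 - X Y) = det (1 - Y X)`.
-/

open Matrix Finset

theorem Matrix.det_one_sub_smul_mul {R m ι : Type*} [CommRing R] [Fintype m] [DecidableEq m]
    [Unique ι] (c : R) (u : Matrix m ι R) (w : Matrix ι m R) :
    det (1 - c • (u * w)) = 1 - c * (w * u) default default := by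
  rw [← Matrix.smul_mul, det_one_sub_mul_comm, det_unique, sub_apply, one_apply_eq,
    Matrix.mul_smul, smul_apply, smul_eq_mul]

theorem Finset.sum_pow_smul_mul_one_sub_smul {K R : Type*} [CommRing K] [Ring R] [Algebra K R]
    (d : ℕ) (A B : ℕ → R) (Q : R) (c z : K) (hAd : A d * Q = 0) (hB0 : B 0 = A 0)
    (hB : ∀ i, 1 ≤ i → i ≤ d → B i = A i - c • (A (i - 1) * Q)) :
    (∑ i ∈ range (d + 1), z ^ i • A i) * (1 - (z * c) • Q)
      = ∑ i ∈ range (d + 1), z ^ i • B i := by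
  have hterm (i : ℕ) : z ^ i • A i * ((z * c) • Q) = z ^ (i + 1) • (c • (A i * Q)) := by
    rw [smul_mul_smul_comm, smul_smul, pow_succ, mul_assoc]
  have hcoeff : ∀ i ∈ range d, z ^ (i + 1) • B (i + 1)
      = z ^ (i + 1) • A (i + 1) - z ^ (i + 1) • (c • (A i * Q)) := fun i hi => by
    rw [hB (i + 1) i.succ_pos (mem_range.mp hi), smul_sub, Nat.add_sub_cancel]
  rw [mul_sub, mul_one, sum_mul, sum_congr rfl fun i _ => hterm i,
    sum_range_succ (fun i => z ^ (i + 1) • (c • (A i * Q))) d, hAd,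
    smul_zero, smul_zero, add_zero, sum_range_succ', sum_range_succ' (fun i => z ^ i • B i),
    sum_congr rfl hcoeff, sum_sub_distrib, hB0]
  abel

theorem shift_from_infinity_general (n d : ℕ)
    (A : ℕ → Matrix (Fin n) (Fin n) ℂ)
    (u v : Matrix (Fin n) (Fin 1) ℂ)
    (hAd : A d * u = 0) (hv : (vᴴ * u) 0 0 = 1)
    (mu : ℂ)
    (At : ℕ → Matrix (Fin n) (Fin n) ℂ)
    (hAt0 : At 0 = A 0)
    (hAti : ∀ i, 1 ≤ i → i ≤ d → At i = A i - mu⁻¹ • (A (i - 1) * (u * vᴴ)))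
    (z : ℂ) :
    (∑ i ∈ range (d + 1), z ^ i • A i) * (1 - (z * mu⁻¹) • (u * vᴴ))
        = ∑ i ∈ range (d + 1), z ^ i • At i ∧
    (∑ i ∈ range (d + 1), z ^ i • At i).det
        = (∑ i ∈ range (d + 1), z ^ i • A i).det * (1 - z / mu) := by
  have hAdQ : A d * (u * vᴴ) = 0 := by rw [← Matrix.mul_assoc, hAd, Matrix.zero_mul]
  have hfactor := sum_pow_smul_mul_one_sub_smul d A At (u * vᴴ) mu⁻¹ z hAdQ hAt0 hAti
  have hshift : (1 - (z * mu⁻¹) • (u * vᴴ)).det = 1 - z / mu :=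
    (det_one_sub_smul_mul (z * mu⁻¹) u vᴴ).trans
      (by rw [Fin.default_eq_zero, hv, mul_one, div_eq_mul_inv])
  exact ⟨hfactor, by rw [← hfactor, det_mul, hshift]⟩

theorem shift_from_infinity (n d : ℕ)
    (A : ℕ → Matrix (Fin n) (Fin n) ℂ)
    (u v : Matrix (Fin n) (Fin 1) ℂ) (hu : u ≠ 0)
    (hAd : A d * u = 0) (hv : (vᴴ * u) 0 0 = 1)
    (mu : ℂ) (hmu : mu ≠ 0)
    (At : ℕ → Matrix (Fin n) (Fin n) ℂ)
    (hAt0 : At 0 = A 0)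
    (hAti : ∀ i, 1 ≤ i → i ≤ d → At i = A i - mu⁻¹ • (A (i - 1) * (u * vᴴ)))
    (z : ℂ) :
    (∑ i ∈ range (d + 1), z ^ i • A i) * (1 - (z * mu⁻¹) • (u * vᴴ))
        = ∑ i ∈ range (d + 1), z ^ i • At i ∧
    (∑ i ∈ range (d + 1), z ^ i • At i).det
        = (∑ i ∈ range (d + 1), z ^ i • A i).det * (1 - z / mu) :=
  shift_from_infinity_general n d A u v hAd hv mu At hAt0 hAti z
end

section
/- Let A(z) = z^{-1}A_{-1} + A_0 + zA_1 = (I - zR₊)K₊(I - z^{-1}G₊) with K₊ invertible, and define H_i by H_i = G₊^{-i}H_0 for i < 0, H_0 = Σ_{j=0}^∞ G₊^j K₊^{-1} R₊^j, H_i = H_0 R₊^i for i > 0, assuming the spectral radii of G₊ and R₊ are both < 1 (so the series converges). Then for every z with ρ(G₊) < |z| < 1/ρ(R₊), one has A(z) · (Σ_{i∈ℤ} z^i H_i) = I, i.e., H(z) = Σ_i z^i H_i is the inverse of A(z). -/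
/-!
Write `u = z⁻¹ • G` and `v = z • R`. Then `A(z) = (1 - v) K (1 - u)`, and the hypotheses on `z` say
exactly that `ρ(u) < 1` and `ρ(v) < 1`, so by Gelfand's formula the geometric series
`Sᵤ = ∑ uᵐ` and `Sᵥ = ∑ vᵐ` converge absolutely and invert `1 - u` and `1 - v`.
Since `z⁻ᵐ zᵐ = 1`, `X = H₀ = ∑ uᵐ K⁻¹ vᵐ` solves the Stein equation `X = K⁻¹ + u X v`.
Splitting the Laurent series at `0` gives `H(z) = X Sᵥ + (Sᵤ - 1) X`, and the Stein equation turns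
this into `Sᵤ K⁻¹ Sᵥ = (1 - u)⁻¹ K⁻¹ (1 - v)⁻¹ = A(z)⁻¹`.
-/

open Filter Topology
open scoped NNReal ENNReal

namespace spectrum

theorem spectralRadius_smul {𝕜 A : Type*} [NormedField 𝕜] [Ring A] [Algebra 𝕜 A] (c : 𝕜) (a : A) :
    spectralRadius 𝕜 (c • a) = ‖c‖₊ * spectralRadius 𝕜 a := by
  rcases eq_or_ne c 0 with rfl | hc
  · simp
  · have hu : c • a = Units.mk0 c hc • a := rfl
    rw [spectralRadius, spectralRadius, hu, unit_smul_eq_smul, ← Set.image_smul, iSup_image]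
    simp only [ENNReal.mul_iSup, Units.smul_def, Units.val_mk0, smul_eq_mul, nnnorm_mul,
      ENNReal.coe_mul]

end spectrum

section BanachAlgebra

variable {A : Type*} [NormedRing A] [NormedAlgebra ℂ A] [CompleteSpace A]

theorem eventually_nnnorm_pow_le_of_spectralRadius_lt (a : A) {r : ℝ≥0}
    (h : spectralRadius ℂ a < r) : ∀ᶠ m in atTop, ‖a ^ m‖₊ ≤ r ^ m := by
  have hroot : ∀ᶠ m : ℕ in atTop, (‖a ^ m‖₊ : ℝ≥0∞) ^ (1 / (m : ℝ)) < r :=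
    (spectrum.pow_nnnorm_pow_one_div_tendsto_nhds_spectralRadius a).eventually_lt_const h
  filter_upwards [hroot, eventually_gt_atTop 0] with m hm hm0
  have hpow : ((‖a ^ m‖₊ : ℝ≥0∞) ^ (1 / (m : ℝ))) ^ (m : ℝ) ≤ (r : ℝ≥0∞) ^ (m : ℝ) :=
    ENNReal.rpow_le_rpow hm.le (by positivity)
  rw [← ENNReal.rpow_mul, one_div_mul_cancel (by positivity), ENNReal.rpow_one,
    ENNReal.rpow_natCast] at hpow
  exact_mod_cast hpow

theorem summable_norm_pow_of_spectralRadius_lt_one {a : A} (h : spectralRadius ℂ a < 1) :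
    Summable fun m ↦ ‖a ^ m‖ := by
  obtain ⟨r, har, hr1⟩ := ENNReal.lt_iff_exists_nnreal_btwn.mp h
  refine .of_norm_bounded_eventually_nat
    (summable_geometric_of_lt_one r.coe_nonneg (by exact_mod_cast hr1)) ?_
  filter_upwards [eventually_nnnorm_pow_le_of_spectralRadius_lt a har] with m hm
  rw [norm_norm]
  exact_mod_cast hm

end BanachAlgebra

theorem summable_pow_mul_mul_pow {B : Type*} [NormedRing B] [CompleteSpace B] {a b : B} (c : B)
    (ha : Summable fun m ↦ ‖a ^ m‖) (hb : Summable fun m ↦ ‖b ^ m‖) :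
    Summable fun m ↦ a ^ m * c * b ^ m := by
  refine .of_norm_bounded_eventually_nat (ha.mul_right ‖c‖) ?_
  filter_upwards [hb.tendsto_atTop_zero.eventually_le_const one_pos] with m hm
  calc ‖a ^ m * c * b ^ m‖ ≤ ‖a ^ m‖ * ‖c‖ * ‖b ^ m‖ := norm_mul₃_le
    _ ≤ ‖a ^ m‖ * ‖c‖ := mul_le_of_le_one_right (by positivity) hm

section TopologicalRing

variable {B : Type*} [Ring B] [TopologicalSpace B] [IsTopologicalRing B] [T2Space B]

theorem tsum_pow_mul_mul_pow_eq_add {a b c : B} (h : Summable fun m ↦ a ^ m * c * b ^ m) :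
    ∑' m, a ^ m * c * b ^ m = c + a * (∑' m, a ^ m * c * b ^ m) * b :=
  calc ∑' m, a ^ m * c * b ^ m = a ^ 0 * c * b ^ 0 + ∑' m, a ^ (m + 1) * c * b ^ (m + 1) :=
        h.tsum_eq_zero_add
    _ = c + ∑' m, a * (a ^ m * c * b ^ m) * b := by
        simp only [pow_zero, one_mul, mul_one, pow_succ' a, pow_succ b, mul_assoc]
    _ = c + a * (∑' m, a ^ m * c * b ^ m) * b := by
        rw [(h.mul_left a).tsum_mul_right, h.tsum_mul_left]

theorem tsum_zpow_smul_eq {𝕜 : Type*} [Field 𝕜] [Algebra 𝕜 B] [ContinuousConstSMul 𝕜 B]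
    {z : 𝕜} {R G : B} {H : ℤ → B}
    (hG : Summable fun m ↦ (z⁻¹ • G) ^ m) (hR : Summable fun m ↦ (z • R) ^ m)
    (hHneg : ∀ i : ℤ, i < 0 → H i = G ^ (-i).toNat * H 0)
    (hHpos : ∀ i : ℤ, 0 < i → H i = H 0 * R ^ i.toNat) :
    ∑' i : ℤ, z ^ i • H i = H 0 * ∑' m, (z • R) ^ m + (∑' m, (z⁻¹ • G) ^ m - 1) * H 0 := by
  have hnat (m : ℕ) : z ^ (m : ℤ) • H m = H 0 * (z • R) ^ m := by
    rcases Nat.eq_zero_or_pos m with rfl | hm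
    · simp
    · rw [hHpos m (by exact_mod_cast hm), Int.toNat_natCast, zpow_natCast, smul_pow, mul_smul_comm]
  have hneg (m : ℕ) : z ^ (-(m + 1 : ℤ)) • H (-(m + 1)) = (z⁻¹ • G) ^ (m + 1) * H 0 := by
    rw [hHneg _ (by omega), neg_neg, zpow_neg, smul_pow, smul_mul_assoc, inv_pow]
    norm_cast
  have hG' : ∑' m, (z⁻¹ • G) ^ (m + 1) = ∑' m, (z⁻¹ • G) ^ m - 1 := by
    rw [hG.tsum_eq_zero_add, pow_zero, add_sub_cancel_left]
  have hGsucc : Summable fun m ↦ (z⁻¹ • G) ^ (m + 1) := (summable_nat_add_iff 1).mpr hG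
  rw [tsum_of_nat_of_neg_add_one (by simpa only [hnat] using hR.mul_left (H 0))
    (by simpa only [hneg] using hGsucc.mul_right (H 0))]
  simp only [hnat, hneg]
  rw [hR.tsum_mul_left, hGsucc.tsum_mul_right, hG']

end TopologicalRing

theorem add_sub_one_mul_eq_mul_mul_of_eq_add {B : Type*} [Ring B] {u v c X Su Sv : B}
    (hX : X = c + u * X * v) (hSu : Su * (1 - u) = 1) (hSv : (1 - v) * Sv = 1) :
    X * Sv + (Su - 1) * X = Su * c * Sv := by
  have hu : Su * u = Su - 1 := by rw [← hSu]; noncomm_ring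
  have hv : v * Sv = Sv - 1 := by rw [← hSv]; noncomm_ring
  calc X * Sv + (Su - 1) * X = Su * X * Sv - (Su - 1) * X * (Sv - 1) := by noncomm_ring
    _ = Su * (X - u * X * v) * Sv := by rw [← hu, ← hv]; noncomm_ring
    _ = Su * c * Sv := by rw [eq_sub_of_add_eq hX.symm]

theorem inv_smul_add_add_smul_eq_mul_mul {𝕜 B : Type*} [Field 𝕜] [Ring B] [Algebra 𝕜 B] {z : 𝕜}
    (hz : z ≠ 0) (R K G : B) :
    z⁻¹ • -(K * G) + (K + R * K * G) + z • -(R * K) = (1 - z • R) * K * (1 - z⁻¹ • G) := by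
  simp only [sub_mul, mul_sub, one_mul, mul_one, smul_mul_assoc, mul_smul_comm, smul_sub, smul_smul,
    inv_mul_cancel₀ hz, one_smul, smul_neg]
  abel

theorem mul_tsum_zpow_smul_eq_one {A : Type*} [NormedRing A] [NormedAlgebra ℂ A] [CompleteSpace A]
    {R K Ki G : A} (hK : K * Ki = 1) {z : ℂ} (hz1 : spectralRadius ℂ G < ‖z‖₊)
    (hz2 : ‖z‖₊ * spectralRadius ℂ R < 1) {H : ℤ → A}
    (hH0 : H 0 = ∑' j : ℕ, G ^ j * Ki * R ^ j)
    (hHneg : ∀ i : ℤ, i < 0 → H i = G ^ (-i).toNat * H 0)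
    (hHpos : ∀ i : ℤ, 0 < i → H i = H 0 * R ^ i.toNat) :
    (z⁻¹ • -(K * G) + (K + R * K * G) + z • -(R * K)) * ∑' i : ℤ, z ^ i • H i = 1 := by
  have hz : z ≠ 0 := by rintro rfl; simp at hz1
  set u := z⁻¹ • G
  set v := z • R
  have hu : Summable fun m ↦ ‖u ^ m‖ := by
    refine summable_norm_pow_of_spectralRadius_lt_one ?_
    rw [spectrum.spectralRadius_smul, nnnorm_inv, ENNReal.coe_inv (nnnorm_ne_zero_iff.mpr hz),
      mul_comm, ← div_eq_mul_inv]
    exact ENNReal.div_lt_of_lt_mul (by rwa [one_mul])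
  have hv : Summable fun m ↦ ‖v ^ m‖ :=
    summable_norm_pow_of_spectralRadius_lt_one (by rwa [spectrum.spectralRadius_smul])
  have hterm (m : ℕ) : u ^ m * Ki * v ^ m = G ^ m * Ki * R ^ m := by
    simp only [u, v, smul_pow, smul_mul_assoc, mul_smul_comm, smul_smul, ← mul_pow,
      mul_inv_cancel₀ hz, one_pow, one_smul]
  have hStein : H 0 = Ki + u * H 0 * v := by
    simpa only [hH0, hterm] using tsum_pow_mul_mul_pow_eq_add (summable_pow_mul_mul_pow Ki hu hv)
  rw [inv_smul_add_add_smul_eq_mul_mul hz, tsum_zpow_smul_eq hu.of_norm hv.of_norm hHneg hHpos,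
    add_sub_one_mul_eq_mul_mul_of_eq_add hStein hu.of_norm.tsum_pow_mul_one_sub
      hv.of_norm.one_sub_mul_tsum_pow]
  calc (1 - v) * K * (1 - u) * ((∑' m, u ^ m) * Ki * ∑' m, v ^ m)
      = (1 - v) * (K * ((1 - u) * ∑' m, u ^ m) * Ki) * ∑' m, v ^ m := by noncomm_ring
    _ = 1 := by rw [hu.of_norm.one_sub_mul_tsum_pow, mul_one, hK, mul_one,
      hv.of_norm.one_sub_mul_tsum_pow]

open Matrix

theorem laurent_inverse_series_general (n : ℕ)
    (Am1 A0 A1 R K G : Matrix (Fin n) (Fin n) ℂ)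
    (hK : IsUnit K)
    (h1 : A1 = -(R * K)) (h0 : A0 = K + R * K * G) (hm1 : Am1 = -(K * G))
    (H : ℤ → Matrix (Fin n) (Fin n) ℂ)
    (hH0 : H 0 = ∑' j : ℕ, G ^ j * K⁻¹ * R ^ j)
    (hHneg : ∀ i : ℤ, i < 0 → H i = G ^ (-i).toNat * H 0)
    (hHpos : ∀ i : ℤ, 0 < i → H i = H 0 * R ^ i.toNat)
    (z : ℂ) (hz1 : spectralRadius ℂ G < (‖z‖₊ : ENNReal))
    (hz2 : (‖z‖₊ : ENNReal) * spectralRadius ℂ R < 1) :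
    (z⁻¹ • Am1 + A0 + z • A1) * (∑' i : ℤ, z ^ i • H i) = 1 := by
  subst h1 h0 hm1
  -- The `ℓ∞` operator norm induces the product topology, so the `tsum`s are unchanged.
  let _ : NormedRing (Matrix (Fin n) (Fin n) ℂ) := Matrix.linftyOpNormedRing
  let _ : NormedAlgebra ℂ (Matrix (Fin n) (Fin n) ℂ) := Matrix.linftyOpNormedAlgebra
  have : CompleteSpace (Matrix (Fin n) (Fin n) ℂ) := FiniteDimensional.complete ℂ _
  exact mul_tsum_zpow_smul_eq_one (mul_nonsing_inv K ((isUnit_iff_isUnit_det K).mp hK))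
    hz1 hz2 hH0 hHneg hHpos

theorem laurent_inverse_series (n : ℕ)
    (Am1 A0 A1 R K G : Matrix (Fin n) (Fin n) ℂ)
    (hK : IsUnit K)
    (h1 : A1 = -(R * K)) (h0 : A0 = K + R * K * G) (hm1 : Am1 = -(K * G))
    (hR : spectralRadius ℂ R < 1) (hG : spectralRadius ℂ G < 1)
    (H : ℤ → Matrix (Fin n) (Fin n) ℂ)
    (hH0 : H 0 = ∑' j : ℕ, G ^ j * K⁻¹ * R ^ j)
    (hHneg : ∀ i : ℤ, i < 0 → H i = G ^ (-i).toNat * H 0)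
    (hHpos : ∀ i : ℤ, 0 < i → H i = H 0 * R ^ i.toNat)
    (z : ℂ) (hz1 : spectralRadius ℂ G < (‖z‖₊ : ENNReal))
    (hz2 : (‖z‖₊ : ENNReal) * spectralRadius ℂ R < 1) :
    (z⁻¹ • Am1 + A0 + z • A1) * (∑' i : ℤ, z ^ i • H i) = 1 :=
  laurent_inverse_series_general n Am1 A0 A1 R K G hK h1 h0 hm1 H hH0 hHneg hHpos z hz1 hz2
end

section
/- Under the hypotheses of the previous statement, if additionally H_0 = Σ_{j=0}^∞ G₊^j K₊^{-1} R₊^j is invertible, then A(z^{-1}) admits the factorization A(z^{-1}) = (I - zR₋)K₋(I - z^{-1}G₋) with G₋ = H_0 R₊ H_0^{-1}, R₋ = H_0^{-1} G₊ H_0, and K₋ = A_0 + A_{-1}G₋ = A_0 + R₋A_1. -/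
/-!
Summing the series term by term gives the Stein equation `H₀ = K⁻¹ + G H₀ R`, i.e.
`K H₀ = 1 + K G H₀ R` and `H₀ K = 1 + G H₀ R K`. These turn both `K G G₋` and `R₋ R K` into
`K - H₀⁻¹`, whence `K₋ = R K G + H₀⁻¹`, `K₋ G₋ = R K` and `R₋ K₋ = K G`. Comparing coefficients
with `(1 - z R₋) K₋ (1 - z⁻¹ G₋) = K₋ + R₋ K₋ G₋ - z R₋ K₋ - z⁻¹ K₋ G₋` gives the factorization.
-/

open Matrix

section Stein

variable {A : Type*} [Ring A] [TopologicalSpace A] [IsTopologicalRing A] [T2Space A]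

theorem tsum_pow_mul_mul_pow_eq {G X R : A} (hs : Summable fun j : ℕ => G ^ j * X * R ^ j) :
    ∑' j : ℕ, G ^ j * X * R ^ j = X + G * (∑' j : ℕ, G ^ j * X * R ^ j) * R := by
  have hshift : ∀ j : ℕ, G ^ (j + 1) * X * R ^ (j + 1) = G * (G ^ j * X * R ^ j * R) := by
    intro j
    rw [pow_succ' G, pow_succ R]
    noncomm_ring
  conv_lhs => rw [hs.tsum_eq_zero_add, tsum_congr hshift, (hs.mul_right R).tsum_mul_left G,
    hs.tsum_mul_right R]
  simp only [pow_zero, one_mul, mul_one, mul_assoc]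

/-- When the series diverges its `tsum` is the junk value `0`, which is a unit only in the zero
ring, where the equation holds trivially. -/
theorem eq_add_mul_mul_of_isUnit_tsum {G X R H : A} (hH : H = ∑' j : ℕ, G ^ j * X * R ^ j)
    (hunit : IsUnit H) : H = X + G * H * R := by
  by_cases hs : Summable fun j : ℕ => G ^ j * X * R ^ j
  · rw [hH]
    exact tsum_pow_mul_mul_pow_eq hs
  · rw [hH, tsum_eq_zero_of_not_summable hs] at hunit
    have : Subsingleton A := subsingleton_of_zero_eq_one (isUnit_zero_iff.mp hunit)
    exact Subsingleton.elim _ _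

end Stein

theorem one_sub_smul_mul_mul_one_sub_inv_smul {𝕜 A : Type*} [Field 𝕜] [Ring A] [Algebra 𝕜 A]
    {z : 𝕜} (hz : z ≠ 0) (R K G : A) :
    (1 - z • R) * K * (1 - z⁻¹ • G) = z • -(R * K) + (K + R * K * G) + z⁻¹ • -(K * G) := by
  have expand : (1 - z • R) * K * (1 - z⁻¹ • G)
      = K - z⁻¹ • (K * G) - z • (R * K) + (z * z⁻¹) • (R * K * G) := by
    simp only [sub_mul, mul_sub, one_mul, mul_one, smul_mul_assoc, mul_smul_comm, mul_assoc]
    module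
  rw [expand, mul_inv_cancel₀ hz, one_smul, smul_neg, smul_neg]
  abel

section Reversal

variable {A : Type*} [Ring A] {R G : A} {K H : Aˣ} (hstein : (H : A) = ↑K⁻¹ + G * H * R)
include hstein

theorem mul_mul_conj_eq_sub_inv : K * G * (H * R * ↑H⁻¹) = K - ↑H⁻¹ := by
  have hKH : (K : A) * G * H * R = K * H - 1 := by
    conv_rhs => rw [hstein, mul_add, Units.mul_inv]
    noncomm_ring
  calc (K : A) * G * (H * R * ↑H⁻¹) = (K * G * H * R) * ↑H⁻¹ := by noncomm_ring
    _ = K - ↑H⁻¹ := by rw [hKH, sub_mul, mul_assoc, Units.mul_inv, mul_one, one_mul]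

theorem conj_mul_mul_eq_sub_inv : ↑H⁻¹ * G * H * (R * K) = K - ↑H⁻¹ := by
  have hHK : G * H * R * (K : A) = H * K - 1 := by
    conv_rhs => rw [hstein, add_mul, Units.inv_mul]
    noncomm_ring
  calc ↑H⁻¹ * G * H * (R * K) = ↑H⁻¹ * (G * H * R * (K : A)) := by noncomm_ring
    _ = K - ↑H⁻¹ := by rw [hHK, mul_sub, ← mul_assoc, Units.inv_mul, one_mul, mul_one]

theorem reversed_middle_eq : (K + R * K * G) + -(K * G) * (H * R * ↑H⁻¹) = R * K * G + ↑H⁻¹ := by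
  rw [neg_mul, mul_mul_conj_eq_sub_inv hstein]
  abel

theorem reversed_middle_mul_conj :
    (R * K * G + ↑H⁻¹) * (H * R * ↑H⁻¹) = R * K := by
  calc (R * K * G + ↑H⁻¹) * (H * R * ↑H⁻¹)
        = R * (K * G * (H * R * ↑H⁻¹)) + (↑H⁻¹ * H) * R * ↑H⁻¹ := by noncomm_ring
    _ = R * K := by rw [mul_mul_conj_eq_sub_inv hstein, Units.inv_mul]; noncomm_ring

theorem conj_mul_reversed_middle :
    ↑H⁻¹ * G * H * (R * K * G + ↑H⁻¹) = K * G := by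
  calc ↑H⁻¹ * G * H * (R * K * G + ↑H⁻¹)
        = ↑H⁻¹ * G * H * (R * K) * G + ↑H⁻¹ * G * (H * ↑H⁻¹) := by noncomm_ring
    _ = K * G := by rw [conj_mul_mul_eq_sub_inv hstein, Units.mul_inv]; noncomm_ring

end Reversal

theorem reversed_canonical_factorization_general (n : ℕ)
    (Am1 A0 A1 R K G : Matrix (Fin n) (Fin n) ℂ)
    (hK : IsUnit K)
    (h1 : A1 = -(R * K)) (h0 : A0 = K + R * K * G) (hm1 : Am1 = -(K * G))
    (H0 : Matrix (Fin n) (Fin n) ℂ)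
    (hH0 : H0 = ∑' j : ℕ, G ^ j * K⁻¹ * R ^ j)
    (hH0inv : IsUnit H0) :
    let Gm := H0 * R * H0⁻¹
    let Rm := H0⁻¹ * G * H0
    let Km := A0 + Am1 * Gm
    (∀ z : ℂ, z ≠ 0 →
        z • Am1 + A0 + z⁻¹ • A1 = (1 - z • Rm) * Km * (1 - z⁻¹ • Gm)) ∧
      Km = A0 + Rm * A1 := by
  obtain ⟨K, rfl⟩ := hK
  have hstein := eq_add_mul_mul_of_isUnit_tsum hH0 hH0inv
  obtain ⟨H, rfl⟩ := hH0inv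
  rw [← coe_units_inv] at hstein
  intro Gm Rm Km
  simp only [Gm, Rm, Km, ← coe_units_inv]
  subst h1 h0 hm1
  rw [reversed_middle_eq hstein]
  refine ⟨fun z hz => ?_, ?_⟩
  · rw [one_sub_smul_mul_mul_one_sub_inv_smul hz, reversed_middle_mul_conj hstein,
      conj_mul_reversed_middle hstein, mul_mul_conj_eq_sub_inv hstein]
    abel
  · rw [mul_neg, conj_mul_mul_eq_sub_inv hstein]
    abel

theorem reversed_canonical_factorization (n : ℕ)
    (Am1 A0 A1 R K G : Matrix (Fin n) (Fin n) ℂ)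
    (hK : IsUnit K)
    (h1 : A1 = -(R * K)) (h0 : A0 = K + R * K * G) (hm1 : Am1 = -(K * G))
    (hR : spectralRadius ℂ R < 1) (hG : spectralRadius ℂ G < 1)
    (H0 : Matrix (Fin n) (Fin n) ℂ)
    (hH0 : H0 = ∑' j : ℕ, G ^ j * K⁻¹ * R ^ j)
    (hH0inv : IsUnit H0) :
    let Gm := H0 * R * H0⁻¹
    let Rm := H0⁻¹ * G * H0
    let Km := A0 + Am1 * Gm
    (∀ z : ℂ, z ≠ 0 →
        z • Am1 + A0 + z⁻¹ • A1 = (1 - z • Rm) * Km * (1 - z⁻¹ • Gm)) ∧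
      Km = A0 + Rm * A1 :=
  reversed_canonical_factorization_general n Am1 A0 A1 R K G hK h1 h0 hm1 H0 hH0 hH0inv
end
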